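/- For any cutting of a pizza into n slices, Alice has a zero-jump strategy with gain |P|/3: if n is even she gains |P|/2 ≥ |P|/3, and if n is odd, the potential p(V) of the characteristic cycle satisfies p(V) ≥ |V|/3, and Alice gains at least p(V) by taking an element of maximum potential and then making only shifts. -/

import Mathlib

open Fin.NatCast

/-- Adjacency of slices on the circular pizza with `n` slices. -/
def adj (n : ℕ) (i j : Fin n) : Prop :=
  (i.1 + 1) % n = j.1 ∨ (j.1 + 1) % n = i.1

instance (n : ℕ) (i j : Fin n) : Decidable (adj n i j) := by
  unfold adj; infer_instance

/-- `h` lists the slices taken so far, in the order they were taken.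
It is a valid (partial) play of the Polite Pizza Protocol if no slice is taken
twice and every slice except the first is adjacent to a previously taken one. -/
def ValidHist (n : ℕ) (h : List (Fin n)) : Prop :=
  h.Nodup ∧ ∀ (k : ℕ) (hk : k < h.length), 0 < k →
    ∃ (j : ℕ) (hj : j < k), adj n (h.get ⟨k, hk⟩) (h.get ⟨j, hj.trans hk⟩)

/-- `m` is a legal next slice after history `h`. -/
def ValidMove (n : ℕ) (h : List (Fin n)) (m : Fin n) : Prop :=
  m ∉ h ∧ (h = [] ∨ ∃ x ∈ h, adj n m x)

/-- Total size of the slices taken at (0-based) turns satisfying `f`. -/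
def gainOn (n : ℕ) (P : Fin n → ℝ) (f : ℕ → Bool) (l : List (Fin n)) : ℝ :=
  (((l.zipIdx.map Prod.swap).filter (fun p => f p.1)).map (fun p => P p.2)).sum

/-- Alice moves at even turns (0-based), Bob at odd turns. -/
def isAlice (k : ℕ) : Bool := k % 2 == 0
def isBob (k : ℕ) : Bool := k % 2 == 1

def aliceGain (n : ℕ) (P : Fin n → ℝ) (l : List (Fin n)) : ℝ := gainOn n P isAlice l
def bobGain (n : ℕ) (P : Fin n → ℝ) (l : List (Fin n)) : ℝ := gainOn n P isBob l

/-- The play `l` is consistent with the strategy `s` used at the turns satisfying `f`. -/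
def Consistent (n : ℕ) (f : ℕ → Bool) (s : List (Fin n) → Fin n) (l : List (Fin n)) : Prop :=
  ∀ (k : ℕ) (hk : k < l.length), f k → l.get ⟨k, hk⟩ = s (l.take k)

/-- The strategy `s`, used at turns satisfying `f`, always produces legal moves. -/
def Legal (n : ℕ) (f : ℕ → Bool) (s : List (Fin n) → Fin n) : Prop :=
  ∀ h, ValidHist n h → h.length < n → f h.length → ValidMove n h (s h)

/-- Number of jumps made at turns satisfying `f` during the play `l`:
turn `k ≥ 1` is a jump if the slice taken is not adjacent to the one taken at turn `k-1`. -/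
def jumpCount (n : ℕ) (f : ℕ → Bool) (l : List (Fin n)) : ℕ :=
  (((l.zip l.tail).zipIdx.map Prod.swap).filter
    (fun p => f (p.1 + 1) && !(decide (adj n p.2.2 p.2.1)))).length

/-- Alice has a strategy making at most `j` jumps and guaranteeing her
slices of total size at least `g`. -/
def AliceJGain (n : ℕ) (P : Fin n → ℝ) (j : ℕ) (g : ℝ) : Prop :=
  ∃ s : List (Fin n) → Fin n, Legal n isAlice s ∧
    ∀ l : List (Fin n), ValidHist n l → l.length = n → Consistent n isAlice s l →
      g ≤ aliceGain n P l ∧ jumpCount n isAlice l ≤ j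

/-- Alice has a strategy guaranteeing her slices of total size at least `g`. -/
def AliceGain' (n : ℕ) (P : Fin n → ℝ) (g : ℝ) : Prop :=
  ∃ s : List (Fin n) → Fin n, Legal n isAlice s ∧
    ∀ l : List (Fin n), ValidHist n l → l.length = n → Consistent n isAlice s l →
      g ≤ aliceGain n P l

/-- Bob (moving second) has a strategy guaranteeing him slices of total size at least `g`. -/
def BobGain' (n : ℕ) (P : Fin n → ℝ) (g : ℝ) : Prop :=
  ∃ s : List (Fin n) → Fin n, Legal n isBob s ∧
    ∀ l : List (Fin n), ValidHist n l → l.length = n → Consistent n isBob s l →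
      g ≤ bobGain n P l
/-- The arc of `l` consecutive elements of the circular sequence on `Fin n`
starting at `s`. -/
def arcSet (n : ℕ) [NeZero n] (s : Fin n) (l : ℕ) : Finset (Fin n) :=
  (Finset.range l).image (fun k : ℕ => s + (k : Fin n))

/-- The size (total weight) of the arc of length `l` starting at `s`. -/
def arcSum (n : ℕ) [NeZero n] (V : Fin n → ℝ) (s : Fin n) (l : ℕ) : ℝ :=
  ∑ k ∈ Finset.range l, V (s + (k : Fin n))

/-- Length of a half-circle: `(n+1)/2`. -/
def hcLen (n : ℕ) : ℕ := (n + 1) / 2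

/-- The half-circle (arc of `(n+1)/2` consecutive elements) starting at `s`. -/
def hcSet (n : ℕ) [NeZero n] (s : Fin n) : Finset (Fin n) := arcSet n s (hcLen n)

/-- The size of the half-circle starting at `s`. -/
def hcSum (n : ℕ) [NeZero n] (V : Fin n → ℝ) (s : Fin n) : ℝ := arcSum n V s (hcLen n)

/-- The potential of an element `v`: the minimum size of a half-circle covering `v`. -/
noncomputable def pot (n : ℕ) [NeZero n] (V : Fin n → ℝ) (v : Fin n) : ℝ :=
  sInf {x : ℝ | ∃ s : Fin n, v ∈ hcSet n s ∧ x = hcSum n V s}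

/-- The potential `p(V)` of the circular sequence: the maximum potential of an element. -/
noncomputable def potV (n : ℕ) [NeZero n] (V : Fin n → ℝ) : ℝ :=
  sSup {x : ℝ | ∃ v : Fin n, x = pot n V v}

/-- A minimal covering triple of half-circles: the three half-circles cover everything,
`s1` has minimum size among all half-circles, all three have size at most `p(V)`, and
none of them can be replaced by a half-circle of strictly smaller size keeping the
covering property. -/
def MinTriple (n : ℕ) [NeZero n] (V : Fin n → ℝ) (s1 s2 s3 : Fin n) : Prop :=
  hcSet n s1 ∪ hcSet n s2 ∪ hcSet n s3 = Finset.univ ∧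
  (∀ t, hcSum n V s1 ≤ hcSum n V t) ∧
  hcSum n V s1 ≤ potV n V ∧ hcSum n V s2 ≤ potV n V ∧ hcSum n V s3 ≤ potV n V ∧
  (∀ t, hcSet n t ∪ hcSet n s2 ∪ hcSet n s3 = Finset.univ → hcSum n V s1 ≤ hcSum n V t) ∧
  (∀ t, hcSet n s1 ∪ hcSet n t ∪ hcSet n s3 = Finset.univ → hcSum n V s2 ≤ hcSum n V t) ∧
  (∀ t, hcSet n s1 ∪ hcSet n s2 ∪ hcSet n t = Finset.univ → hcSum n V s3 ≤ hcSum n V t)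

/-- The partition of the circular sequence into six consecutive arcs `A,…,F`
(of lengths `lA,…,lF`, starting at `s0`) such that the half-circles of the triple
`(s1,s2,s3)` are `ABC`, `CDE` and `EFA`. -/
def TriplePartition (n : ℕ) [NeZero n] (s1 s2 s3 s0 : Fin n)
    (lA lB lC lD lE lF : ℕ) : Prop :=
  lA + lB + lC + lD + lE + lF = n ∧
  lA = lD + 1 ∧ lC = lF + 1 ∧ lE = lB + 1 ∧ 2 ≤ lA ∧ 2 ≤ lC ∧ 2 ≤ lE ∧
  hcSet n s1 = arcSet n s0 (lA + lB + lC) ∧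
  hcSet n s2 = arcSet n (s0 + ((lA + lB : ℕ) : Fin n)) (lC + lD + lE) ∧
  hcSet n s3 = arcSet n (s0 + ((lA + lB + lC + lD : ℕ) : Fin n)) (lE + lF + lA)

/-!
For odd `n` the characteristic cycle `V k = P (2 k)` is a rearrangement of `P`. If every element
of `V` lay in a half-circle lighter than `|V| / 3`, take a light half-circle, then among the light
ones covering the element just after it one reaching furthest, then a light one covering the
element just after that. By the maximal choice these three cover `V`, which is absurd; so some
`w` has potential at least `|V| / 3`.

In Alice's zero-jump strategy she takes `a`, then always the successor of the slice just taken,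
or its predecessor once the successor is gone. The taken slices always form an arc, and Alice
ends up with every other slice of it, `c, c + 2, …, c + 2 (⌈n / 2⌉ - 1)` with `a = c + 2 r`.
For odd `n` and `a = 2 w` this is the half-circle of `V` through `w` starting at `w - r`; for even
`n` it is the parity class of `a`, and Alice starts in the heavier class.
-/

open Fin.CommRing Finset

section Arcs

variable {n : ℕ} [NeZero n]

lemma adj_iff {i j : Fin n} : adj n i j ↔ i = j + 1 ∨ i = j - 1 := by
  have key : ∀ x y : Fin n, (x.1 + 1) % n = y.1 ↔ x + 1 = y := fun x y => by
    rw [Fin.ext_iff, Fin.val_add, Fin.val_one', Nat.add_mod_mod]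
  rw [adj, key, key, eq_sub_iff_add_eq]
  tauto

lemma mem_arcSet {b x : Fin n} {l : ℕ} : x ∈ arcSet n b l ↔ ∃ k < l, b + k = x := by
  simp [arcSet]

lemma arcSet_succ (b : Fin n) (l : ℕ) : arcSet n b (l + 1) = insert (b + l) (arcSet n b l) := by
  rw [arcSet, range_add_one, image_insert, arcSet]

lemma arcSet_sub_one_succ (b : Fin n) (l : ℕ) :
    arcSet n (b - 1) (l + 1) = insert (b - 1) (arcSet n b l) := by
  rw [arcSet, range_add_one', image_insert, map_eq_image, image_image, arcSet]
  congr 1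
  · simp
  · refine image_congr fun k _ => ?_
    change b - 1 + ((k + 1 : ℕ) : Fin n) = b + k
    push_cast
    ring

lemma add_length_notMem_arcSet (b : Fin n) {l : ℕ} (hl : l < n) : b + l ∉ arcSet n b l := by
  rw [mem_arcSet]
  rintro ⟨k, hk, h⟩
  have := CharP.natCast_injOn_Iio (Fin n) n (hk.trans hl) hl (add_left_cancel h)
  omega

lemma sub_one_notMem_arcSet (b : Fin n) {l : ℕ} (hl : l < n) : b - 1 ∉ arcSet n b l := by
  rw [mem_arcSet]
  rintro ⟨k, hk, h⟩
  have h0 : ((k + 1 : ℕ) : Fin n) = 0 := by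
    push_cast
    linear_combination h
  obtain ⟨m, hm⟩ := Fin.natCast_eq_zero.1 h0
  rcases m with _ | m
  · omega
  · nlinarith

lemma eq_add_length_or_eq_sub_one {b x y : Fin n} {l : ℕ} (hy : y ∈ arcSet n b l)
    (hx : x ∉ arcSet n b l) (hxy : adj n x y) : x = b + l ∨ x = b - 1 := by
  obtain ⟨k, hk, rfl⟩ := mem_arcSet.1 hy
  rcases adj_iff.1 hxy with rfl | rfl
  · left
    obtain rfl : k + 1 = l := by
      by_contra hne
      exact hx (mem_arcSet.2 ⟨k + 1, by omega, by push_cast; ring⟩)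
    push_cast
    ring
  · right
    rcases k with _ | k
    · simp
    · exact absurd (mem_arcSet.2 ⟨k, by omega, by push_cast; ring⟩) hx

end Arcs

theorem Nat.exists_two_intervals_cover {p : ℕ → Prop} {m : ℕ}
    (hp : ∀ d, m ≤ d → ∃ k < m, p (d - k)) :
    ∃ i j, p i ∧ p j ∧ ∀ d ≤ 2 * m, d < m ∨ i ≤ d ∧ d < i + m ∨ j ≤ d ∧ d < j + m := by
  classical
  obtain ⟨k, hk, hpk⟩ := hp m le_rfl
  -- `i` is the last start in `[0, m]`, so the interval covering `i + m` starts beyond `m`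
  set i := Nat.findGreatest p m
  have hki : m - k ≤ i := Nat.le_findGreatest (Nat.sub_le m k) hpk
  obtain ⟨k', hk', hpk'⟩ := hp (i + m) (by omega)
  have hj : m < i + m - k' := by
    by_contra hle
    exact Nat.findGreatest_is_greatest (P := p) (n := m) (by omega) (by omega) hpk'
  refine ⟨i, i + m - k', Nat.findGreatest_spec (Nat.sub_le m k) hpk, hpk', fun d hd => ?_⟩
  have := Nat.findGreatest_le (P := p) m
  omega

lemma hcLen_le (n : ℕ) : hcLen n ≤ n := by
  unfold hcLen; omega

lemma le_two_mul_hcLen (n : ℕ) : n ≤ 2 * hcLen n := by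
  unfold hcLen; omega

section Potential

variable {n : ℕ} [NeZero n]

lemma hcLen_pos : 0 < hcLen n := by
  have := NeZero.pos n
  unfold hcLen; omega

lemma mem_hcSet {s x : Fin n} : x ∈ hcSet n s ↔ ∃ k < hcLen n, s + k = x := mem_arcSet

lemma add_mem_hcSet_add (s : Fin n) {i d : ℕ} (hid : i ≤ d) (hd : d < i + hcLen n) :
    s + d ∈ hcSet n (s + i) :=
  mem_hcSet.2 ⟨d - i, by omega, by rw [Nat.cast_sub hid]; ring⟩

lemma self_mem_hcSet (s : Fin n) : s ∈ hcSet n s :=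
  mem_hcSet.2 ⟨0, hcLen_pos, by simp⟩

lemma hcSum_eq_sum_hcSet (V : Fin n → ℝ) (s : Fin n) : hcSum n V s = ∑ x ∈ hcSet n s, V x := by
  rw [hcSum, arcSum, hcSet, arcSet, sum_image fun k₁ hk₁ k₂ hk₂ h => ?_]
  simp only [coe_range, Set.mem_Iio] at hk₁ hk₂
  exact CharP.natCast_injOn_Iio (Fin n) n (hk₁.trans_le (hcLen_le n))
    (hk₂.trans_le (hcLen_le n)) (add_left_cancel h)

lemma sum_union_le_of_nonneg {α M : Type*} [DecidableEq α] [AddCommMonoid M] [PartialOrder M]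
    [IsOrderedAddMonoid M] {f : α → M} (hf : 0 ≤ f) (s t : Finset α) :
    ∑ x ∈ s ∪ t, f x ≤ ∑ x ∈ s, f x + ∑ x ∈ t, f x := by
  rw [← sum_union_inter]
  exact le_add_of_nonneg_right (sum_nonneg fun x _ => hf x)

lemma sum_le_of_three_hcSet_cover {V : Fin n → ℝ} (hV : 0 ≤ V) {s₁ s₂ s₃ : Fin n}
    (hcov : ∀ x, x ∈ hcSet n s₁ ∨ x ∈ hcSet n s₂ ∨ x ∈ hcSet n s₃) :
    ∑ x, V x ≤ hcSum n V s₁ + hcSum n V s₂ + hcSum n V s₃ := by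
  have huniv : (univ : Finset (Fin n)) = hcSet n s₁ ∪ hcSet n s₂ ∪ hcSet n s₃ := by
    ext x; simpa [or_assoc] using hcov x
  rw [huniv, hcSum_eq_sum_hcSet, hcSum_eq_sum_hcSet, hcSum_eq_sum_hcSet]
  linarith [sum_union_le_of_nonneg hV (hcSet n s₁ ∪ hcSet n s₂) (hcSet n s₃),
    sum_union_le_of_nonneg hV (hcSet n s₁) (hcSet n s₂)]

theorem exists_forall_mem_hcSet_le_hcSum {V : Fin n → ℝ} (hV : 0 ≤ V) :
    ∃ w, ∀ s, w ∈ hcSet n s → (∑ x, V x) / 3 ≤ hcSum n V s := by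
  by_contra! hlight
  obtain ⟨s, -, hs⟩ := hlight 0
  obtain ⟨i, j, hi, hj, hcov⟩ := Nat.exists_two_intervals_cover
    (p := fun d : ℕ => hcSum n V (s + d) < (∑ x, V x) / 3) (m := hcLen n)
    (fun d _ => by
      obtain ⟨t, ht, hlt⟩ := hlight (s + d)
      obtain ⟨k, hk, hkt⟩ := mem_hcSet.1 ht
      refine ⟨k, hk, ?_⟩
      rwa [Nat.cast_sub (by omega), add_sub, ← hkt, add_sub_cancel_right])
  have hcover : ∀ x, x ∈ hcSet n s ∨ x ∈ hcSet n (s + i) ∨ x ∈ hcSet n (s + j) := by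
    intro x
    obtain ⟨d, hd, rfl⟩ : ∃ d < n, s + d = x := ⟨(x - s).val, (x - s).isLt, by simp⟩
    rcases hcov d (by have := le_two_mul_hcLen n; omega) with h | h | h
    · exact Or.inl (by simpa using add_mem_hcSet_add s (Nat.zero_le d) (by omega))
    · exact Or.inr (Or.inl (add_mem_hcSet_add s h.1 h.2))
    · exact Or.inr (Or.inr (add_mem_hcSet_add s h.1 h.2))
  linarith [sum_le_of_three_hcSet_cover hV hcover]

theorem le_potV_of_forall_mem_hcSet {V : Fin n → ℝ} {w : Fin n} {c : ℝ}
    (h : ∀ s, w ∈ hcSet n s → c ≤ hcSum n V s) : c ≤ potV n V := by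
  have hpot : c ≤ pot n V w :=
    le_csInf ⟨_, w, self_mem_hcSet w, rfl⟩ (by rintro _ ⟨s, hs, rfl⟩; exact h s hs)
  exact hpot.trans <| le_csSup ((Set.finite_range (pot n V)).bddAbove.mono
    (by rintro _ ⟨v, rfl⟩; exact ⟨v, rfl⟩)) ⟨w, rfl⟩

end Potential

section Plays

variable {n : ℕ}

lemma ValidHist.of_append_singleton {h : List (Fin n)} {x : Fin n} (hv : ValidHist n (h ++ [x])) :
    ValidHist n h ∧ ValidMove n h x := by
  obtain ⟨hnd, hadj⟩ := hv
  rw [List.nodup_append] at hnd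
  refine ⟨⟨hnd.1, fun k hk hk0 => ?_⟩, fun hx => by simpa using hnd.2.2 x hx x, ?_⟩
  · obtain ⟨j, hj, hkj⟩ := hadj k (by simp; omega) hk0
    exact ⟨j, hj, by simpa [List.getElem_append_left hk, List.getElem_append_left (hj.trans hk)]
      using hkj⟩
  · rcases Nat.eq_zero_or_pos h.length with h0 | hpos
    · exact Or.inl (List.length_eq_zero_iff.1 h0)
    · obtain ⟨j, hj, hxj⟩ := hadj h.length (by simp) hpos
      refine Or.inr ⟨h[j], List.getElem_mem _, ?_⟩
      simpa [List.getElem_append_left hj] using hxj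

lemma Consistent.of_append_singleton {f : ℕ → Bool} {s : List (Fin n) → Fin n}
    {h : List (Fin n)} {x : Fin n} (hc : Consistent n f s (h ++ [x])) :
    Consistent n f s h ∧ (f h.length → x = s h) := by
  refine ⟨fun k hk hf => ?_, fun hf => by simpa using hc h.length (by simp) hf⟩
  simpa [List.getElem_append_left hk, List.take_append_of_le_length hk.le] using
    hc k (by simp; omega) hf

lemma gainOn_append_singleton (P : Fin n → ℝ) (f : ℕ → Bool) (h : List (Fin n)) (x : Fin n) :
    gainOn n P f (h ++ [x]) = gainOn n P f h + if f h.length then P x else 0 := by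
  by_cases hf : f h.length <;> simp [gainOn, List.zipIdx_append, hf]

lemma aliceGain_append_singleton (P : Fin n → ℝ) (h : List (Fin n)) (x : Fin n) :
    aliceGain n P (h ++ [x]) = aliceGain n P h + if isAlice h.length then P x else 0 :=
  gainOn_append_singleton P isAlice h x

lemma jumpCount_eq_zero_of_forall_adj {f : ℕ → Bool} {l : List (Fin n)}
    (h : ∀ k (hk : k + 1 < l.length), f (k + 1) → adj n l[k + 1] l[k]) :
    jumpCount n f l = 0 := by
  rw [jumpCount, List.length_eq_zero_iff, List.filter_eq_nil_iff]
  rintro ⟨k, y, z⟩ hp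
  simp only [List.mem_map, Prod.exists, Prod.swap_prod_mk, Prod.mk.injEq] at hp
  obtain ⟨_, _, _, hmem, rfl, rfl, rfl⟩ := hp
  obtain ⟨hk, hkyz⟩ := List.getElem?_eq_some_iff.1 (List.mk_mem_zipIdx_iff_getElem?.1 hmem)
  simp only [List.getElem_zip, List.getElem_tail, Prod.mk.injEq] at hkyz
  obtain ⟨rfl, rfl⟩ := hkyz
  simp only [List.length_zip, List.length_tail] at hk
  simpa using h _ (by omega)

end Plays

section Strategy

variable {n : ℕ} [NeZero n]

lemma List.toFinset_append_singleton {α : Type*} [DecidableEq α] (l : List α) (x : α) :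
    (l ++ [x]).toFinset = insert x l.toFinset := by
  ext; simp

lemma ValidHist.exists_arcSet {h : List (Fin n)} {x : Fin n} (hv : ValidHist n (h ++ [x])) :
    ∃ b, (h ++ [x]).toFinset = arcSet n b (h.length + 1) ∧ (x = b ∨ x = b + h.length) := by
  induction h using List.reverseRecOn generalizing x with
  | nil => exact ⟨x, by simp [arcSet], Or.inl rfl⟩
  | append_singleton h y ih =>
    obtain ⟨hv, hfresh, hadj⟩ := hv.of_append_singleton
    obtain ⟨b, harc, -⟩ := ih hv
    obtain ⟨z, hz, hxz⟩ := hadj.resolve_left (by simp)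
    rw [← List.mem_toFinset, harc] at hz hfresh
    rw [List.toFinset_append_singleton, harc, List.length_append, List.length_singleton]
    rcases eq_add_length_or_eq_sub_one hz hfresh hxz with rfl | rfl
    · exact ⟨b, (arcSet_succ b _).symm, Or.inr rfl⟩
    · exact ⟨b - 1, (arcSet_sub_one_succ b _).symm, Or.inl rfl⟩

def shiftStrategy (a : Fin n) (h : List (Fin n)) : Fin n :=
  match h.getLast? with
  | none => a
  | some x => if x + 1 ∈ h then x - 1 else x + 1

lemma shiftStrategy_append_singleton (a : Fin n) (h : List (Fin n)) (x : Fin n) :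
    shiftStrategy a (h ++ [x]) = if x + 1 ∈ h ++ [x] then x - 1 else x + 1 := by
  simp [shiftStrategy]

lemma adj_shiftStrategy_append_singleton (a : Fin n) (h : List (Fin n)) (x : Fin n) :
    adj n (shiftStrategy a (h ++ [x])) x := by
  rw [shiftStrategy_append_singleton, adj_iff]
  split_ifs <;> simp

lemma ValidHist.add_one_notMem_or_sub_one_notMem {h : List (Fin n)} {x : Fin n}
    (hv : ValidHist n (h ++ [x])) (hlen : h.length + 1 < n) :
    x + 1 ∉ h ++ [x] ∨ x - 1 ∉ h ++ [x] := by
  obtain ⟨b, harc, hx⟩ := hv.exists_arcSet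
  simp only [← List.mem_toFinset, harc]
  rcases hx with rfl | rfl
  · exact Or.inr (sub_one_notMem_arcSet _ hlen)
  · left
    rw [add_assoc]
    exact_mod_cast add_length_notMem_arcSet b hlen

theorem shiftStrategy_legal (a : Fin n) : Legal n isAlice (shiftStrategy a) := by
  intro h hv hlen _
  induction h using List.reverseRecOn with
  | nil => exact ⟨List.not_mem_nil, Or.inl rfl⟩
  | append_singleton h x _ =>
    refine ⟨?_, Or.inr ⟨x, by simp, adj_shiftStrategy_append_singleton a h x⟩⟩
    have hfree := hv.add_one_notMem_or_sub_one_notMem (by simpa using hlen)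
    rw [shiftStrategy_append_singleton]
    split_ifs with hmem
    · exact hfree.resolve_left (not_not.2 hmem)
    · exact hmem

theorem jumpCount_eq_zero_of_consistent_shiftStrategy {a : Fin n} {l : List (Fin n)}
    (hc : Consistent n isAlice (shiftStrategy a) l) : jumpCount n isAlice l = 0 := by
  refine jumpCount_eq_zero_of_forall_adj fun k hk hf => ?_
  have hmove := hc (k + 1) hk hf
  rw [List.get_eq_getElem] at hmove
  rw [hmove, List.take_add_one, List.getElem?_eq_getElem (by omega), Option.toList_some]
  exact adj_shiftStrategy_append_singleton a _ _

end Strategy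

section Play

variable {n : ℕ} [NeZero n]

/-- The position after the moves `h ++ [x]` of a play in which Alice follows `shiftStrategy a`:
Alice holds `c, c + 2, …, c + 2 (h.length / 2)`, among them `a`; the taken slices form an arc,
and after a move of Bob the last slice `x` is one of its ends. -/
def ShiftPosition (P : Fin n → ℝ) (a c : Fin n) (r : ℕ) (h : List (Fin n)) (x : Fin n) : Prop :=
  a = c + 2 * r ∧ r ≤ h.length / 2 ∧
    aliceGain n P (h ++ [x]) = ∑ t ∈ range (h.length / 2 + 1), P (c + 2 * t) ∧
    if Even h.length then (h ++ [x]).toFinset = arcSet n c (h.length + 1)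
    else (h ++ [x]).toFinset = arcSet n c (h.length + 1) ∧ x = c + h.length ∨
      (h ++ [x]).toFinset = arcSet n (c - 1) (h.length + 1) ∧ x = c - 1

variable {P : Fin n → ℝ} {a c : Fin n} {r : ℕ} {h : List (Fin n)} {x y : Fin n}

lemma shiftPosition_singleton : ShiftPosition P a a 0 [] a := by
  refine ⟨by simp, Nat.zero_le _, ?_, ?_⟩
  · simp [aliceGain, gainOn, isAlice]
  · simp [arcSet]

lemma ShiftPosition.bob_move (hpos : ShiftPosition P a c r h y) (hk : Even h.length)
    (hx : ValidMove n (h ++ [y]) x) : ShiftPosition P a c r (h ++ [y]) x := by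
  obtain ⟨ha, hr, hgain, hshape⟩ := hpos
  rw [if_pos hk] at hshape
  obtain ⟨hfresh, hadj⟩ := hx
  obtain ⟨z, hz, hxz⟩ := hadj.resolve_left (by simp)
  rw [← List.mem_toFinset, hshape] at hz hfresh
  have hhalf : (h.length + 1) / 2 = h.length / 2 := by grind
  refine ⟨ha, by simpa [hhalf] using hr, ?_, ?_⟩
  · have hbob : isAlice (h ++ [y]).length = false := by
      simp [isAlice, Nat.even_iff.1 hk, Nat.add_mod]
    rw [aliceGain_append_singleton, hbob, if_neg Bool.false_ne_true, add_zero, hgain]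
    simp [hhalf]
  · rw [if_neg (by simpa [Nat.even_add_one] using hk), List.toFinset_append_singleton, hshape]
    simp only [List.length_append, List.length_singleton]
    rcases eq_add_length_or_eq_sub_one hz hfresh hxz with rfl | rfl
    · exact Or.inl ⟨(arcSet_succ c _).symm, rfl⟩
    · exact Or.inr ⟨(arcSet_sub_one_succ c _).symm, rfl⟩

lemma ShiftPosition.alice_move (hpos : ShiftPosition P a c r h y) (hk : Odd h.length)
    (hlen : h.length + 1 < n) :
    ∃ c' r', ShiftPosition P a c' r' (h ++ [y]) (shiftStrategy a (h ++ [y])) := by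
  obtain ⟨ha, hr, hgain, hshape⟩ := hpos
  rw [if_neg (Nat.not_even_iff_odd.2 hk)] at hshape
  have hhalf : (h.length + 1) / 2 = h.length / 2 + 1 := by grind
  have hodd : Even (h.length + 1) := hk.add_one
  have halice : isAlice (h.length + 1) = true := by simpa [isAlice] using Nat.even_iff.1 hodd
  simp only [ShiftPosition, aliceGain_append_singleton _ (h ++ [y]),
    List.toFinset_append_singleton (h ++ [y]), List.length_append, List.length_singleton,
    if_pos hodd, halice, if_true, hgain, hhalf]
  rcases hshape with ⟨harc, rfl⟩ | ⟨harc, rfl⟩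
  · -- Bob took the upper end, so Alice continues upwards
    have hup : c + h.length + 1 ∉ h ++ [c + h.length] := by
      rw [← List.mem_toFinset, harc, add_assoc]
      exact_mod_cast add_length_notMem_arcSet c hlen
    rw [shiftStrategy_append_singleton, if_neg hup]
    refine ⟨c, r, ha, by omega, ?_, ?_⟩
    · rw [sum_range_succ _ (h.length / 2 + 1)]
      have hend : h.length + 1 = 2 * (h.length / 2 + 1) := by grind
      replace hend : (h.length : Fin n) + 1 = 2 * ((h.length / 2 + 1 : ℕ) : Fin n) := by
        exact_mod_cast congrArg (Nat.cast (R := Fin n)) hend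
      rw [add_assoc, hend]
    · rw [harc, arcSet_succ c (h.length + 1)]
      push_cast
      ring_nf
  · -- Bob took the lower end, so Alice continues downwards
    have hdown : c - 1 + 1 ∈ h ++ [c - 1] := by
      rw [← List.mem_toFinset, harc, mem_arcSet]
      exact ⟨1, by grind, by simp⟩
    rw [shiftStrategy_append_singleton, if_pos hdown]
    refine ⟨c - 1 - 1, r + 1, by rw [ha]; push_cast; ring, by omega, ?_, ?_⟩
    · rw [sum_range_succ' _ (h.length / 2 + 1)]
      simp only [Nat.cast_add, Nat.cast_one, Nat.cast_zero, mul_zero, add_zero]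
      congr 1
      refine sum_congr rfl fun t _ => ?_
      ring_nf
    · rw [harc, arcSet_sub_one_succ (c - 1) (h.length + 1)]

theorem exists_shiftPosition (P : Fin n → ℝ) (hv : ValidHist n (h ++ [x]))
    (hc : Consistent n isAlice (shiftStrategy a) (h ++ [x])) :
    ∃ c r, ShiftPosition P a c r h x := by
  induction h using List.reverseRecOn generalizing x with
  | nil =>
    obtain rfl : x = a := by simpa [shiftStrategy] using hc 0 (by simp) rfl
    exact ⟨x, 0, shiftPosition_singleton⟩
  | append_singleton h y ih =>
    obtain ⟨hv', hmove⟩ := hv.of_append_singleton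
    obtain ⟨hc', hstrat⟩ := hc.of_append_singleton
    obtain ⟨c, r, hpos⟩ := ih hv' hc'
    rcases Nat.even_or_odd h.length with hk | hk
    · exact ⟨c, r, hpos.bob_move hk hmove⟩
    · have hlen : h.length + 2 ≤ n := by simpa using hv.1.length_le_card
      rw [hstrat (by simpa [isAlice, Nat.even_iff] using hk.add_one)]
      exact hpos.alice_move hk hlen

theorem aliceJGain_shiftStrategy (P : Fin n → ℝ) (a : Fin n) {g : ℝ}
    (hg : ∀ r, 2 * r < n → g ≤ ∑ t ∈ range (hcLen n), P (a - 2 * r + 2 * t)) :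
    AliceJGain n P 0 g := by
  refine ⟨shiftStrategy a, shiftStrategy_legal a, fun l hv hlen hc =>
    ⟨?_, (jumpCount_eq_zero_of_consistent_shiftStrategy hc).le⟩⟩
  obtain ⟨h, x, rfl⟩ := (List.eq_nil_or_concat' l).resolve_left
    (by rintro rfl; exact NeZero.ne n hlen.symm)
  obtain ⟨c, r, rfl, hr, hgain, -⟩ := exists_shiftPosition P hv hc
  simp only [List.length_append, List.length_singleton] at hlen
  have hhalf : h.length / 2 + 1 = hcLen n := by unfold hcLen; omega
  rw [hgain, hhalf]
  simpa using hg r (by omega)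

end Play

section Parity

variable {M : Type*} [AddCommMonoid M]

theorem Function.Periodic.sum_range_add [IsRightCancelAdd M] {g : ℕ → M} {m : ℕ}
    (hg : Function.Periodic g m) (j : ℕ) : ∑ t ∈ range m, g (t + j) = ∑ t ∈ range m, g t := by
  induction j with
  | zero => rfl
  | succ j ih =>
    rw [← ih]
    refine add_right_cancel (b := g j) ?_
    have h₁ := sum_range_succ (fun t => g (t + j)) m
    have h₂ := sum_range_succ' (fun t => g (t + j)) m
    simp only [zero_add, add_right_comm _ 1 j, add_comm m j, hg j] at h₁ h₂
    rw [← h₁, h₂]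
    simp only [add_assoc]

theorem sum_range_two_mul (g : ℕ → M) (m : ℕ) :
    ∑ k ∈ range (2 * m), g k = ∑ t ∈ range m, (g (2 * t) + g (2 * t + 1)) := by
  induction m with
  | zero => simp
  | succ m ih => rw [mul_add_one, sum_range_succ, sum_range_succ, ih, sum_range_succ, add_assoc]

variable {n : ℕ} [NeZero n]

theorem sum_range_sub_two_mul_add_two_mul [IsRightCancelAdd M] {m : ℕ} (hnm : n = 2 * m)
    (f : Fin n → M) (c : Fin n) {r : ℕ} (hr : r ≤ m) :
    ∑ t ∈ range m, f (c - 2 * r + 2 * t) = ∑ t ∈ range m, f (c + 2 * t) := by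
  have h2m : ((2 * m : ℕ) : Fin n) = 0 := by rw [← hnm, Fin.natCast_self]
  push_cast at h2m
  have hg : Function.Periodic (fun t : ℕ => f (c + 2 * t)) m := fun t => by
    simp only [Nat.cast_add, mul_add, h2m, add_zero]
  rw [← hg.sum_range_add (m - r)]
  refine sum_congr rfl fun t _ => congr_arg f ?_
  rw [Nat.cast_add, Nat.cast_sub hr]
  linear_combination (-1 : Fin n) * h2m

theorem sum_range_add_two_mul_add_sum_range_add_one_add_two_mul {m : ℕ} (hnm : n = 2 * m)
    (f : Fin n → M) (c : Fin n) :
    ∑ t ∈ range m, f (c + 2 * t) + ∑ t ∈ range m, f (c + 1 + 2 * t) = ∑ x, f x := by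
  have hrange := sum_range_two_mul (fun k => f (c + k)) m
  rw [← hnm, ← Fin.sum_univ_eq_sum_range] at hrange
  simp only [Fin.cast_val_eq_self, Nat.cast_mul, Nat.cast_add, Nat.cast_ofNat, Nat.cast_one]
    at hrange
  rw [← sum_add_distrib, ← Equiv.sum_comp (Equiv.addLeft c) f]
  refine (hrange.trans ?_).symm
  refine sum_congr rfl fun t _ => congr_arg₂ _ rfl (congr_arg f ?_)
  ring

end Parity

section OddCycle

variable {n : ℕ} [NeZero n]

theorem sum_comp_two_mul_of_odd {M : Type*} [AddCommMonoid M] (hn : Odd n) (f : Fin n → M) :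
    ∑ k, f (2 * k) = ∑ k, f k := by
  have h2 : 2 * ((n + 1) / 2) = n + 1 := by obtain ⟨k, rfl⟩ := hn; omega
  have hunit : IsUnit (2 : Fin n) := IsUnit.of_mul_eq_one (((n + 1) / 2 : ℕ) : Fin n) <| by
    simpa using congrArg (Nat.cast (R := Fin n)) h2
  exact Equiv.sum_comp (Units.mulLeft hunit.unit) f

lemma hcSum_comp_two_mul (P : Fin n → ℝ) (u : Fin n) :
    hcSum n (fun k => P (2 * k)) u = ∑ t ∈ range (hcLen n), P (2 * u + 2 * t) := by
  simp only [hcSum, arcSum, mul_add]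

end OddCycle

theorem alice_zero_jump_third_general (n : ℕ) [NeZero n]
    (P : Fin n → ℝ) (hP : ∀ i, 0 ≤ P i) :
    (Odd n → (∑ i, P i) / 3 ≤ potV n (fun k => P (2 * k))) ∧
    AliceJGain n P 0 ((∑ i, P i) / 3) := by
  have hgood (hn : Odd n) :
      ∃ w, ∀ s, w ∈ hcSet n s → (∑ i, P i) / 3 ≤ hcSum n (fun k => P (2 * k)) s := by
    have := exists_forall_mem_hcSet_le_hcSum (V := fun k => P (2 * k)) fun k => hP _
    rwa [sum_comp_two_mul_of_odd hn P] at this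
  refine ⟨fun hn => le_potV_of_forall_mem_hcSet (hgood hn).choose_spec, ?_⟩
  rcases Nat.even_or_odd n with ⟨m, hm⟩ | hn
  · rw [← two_mul] at hm
    have hsplit := sum_range_add_two_mul_add_sum_range_add_one_add_two_mul hm P 0
    simp only [zero_add] at hsplit
    obtain ⟨a, ha⟩ : ∃ a : Fin n, (∑ i, P i) / 2 ≤ ∑ t ∈ range m, P (a + 2 * t) := by
      by_cases h : (∑ i, P i) / 2 ≤ ∑ t ∈ range m, P (2 * t)
      · exact ⟨0, by simpa using h⟩
      · exact ⟨1, by linarith⟩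
    refine aliceJGain_shiftStrategy P a fun r hr => ?_
    have hm' : hcLen n = m := by unfold hcLen; omega
    rw [hm', sum_range_sub_two_mul_add_two_mul hm P a (by omega)]
    linarith [sum_nonneg fun i (_ : i ∈ univ) => hP i]
  · obtain ⟨w, hw⟩ := hgood hn
    refine aliceJGain_shiftStrategy P (2 * w) fun r hr => ?_
    have hr' : r < hcLen n := by unfold hcLen; omega
    have := hw (w - r) (mem_hcSet.2 ⟨r, hr', sub_add_cancel w r⟩)
    rwa [hcSum_comp_two_mul, mul_sub] at this

/-- Alice always has a zero-jump strategy with gain `|P|/3`;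
for odd `n` this comes from `p(V) ≥ |V|/3` for the characteristic cycle
`V(k) = P(2k mod n)`. -/
theorem alice_zero_jump_third (n : ℕ) (hn : 0 < n) [NeZero n]
    (P : Fin n → ℝ) (hP : ∀ i, 0 ≤ P i) :
    (Odd n → (∑ i, P i) / 3 ≤ potV n (fun k => P (2 * k))) ∧
    AliceJGain n P 0 ((∑ i, P i) / 3) :=
  alice_zero_jump_third_general n P hP
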